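/- arXiv:math/0312051 — 6 statements merged into one kernel-verified Lean document; each statement's English description precedes it below -/
import Mathlib

section
/- Let a₁, …, a_k be finitely many pairwise distinct points of ℂ² all of whose second coordinates are nonzero. Then there exists γ ∈ ℂ such that the points Φ_γ(a₁), …, Φ_γ(a_k), where Φ_γ(z₁, z₂) = (z₁ e^{γ z₁ z₂}, z₂ e^{−γ z₁ z₂}), have pairwise distinct second coordinates. In fact, the set of γ ∈ ℂ for which this fails is countable. -/
/-!
The second coordinate of `Φ_γ(a)` is `b * exp (γ * c)` with `b = a₂`, `c = -a₁a₂`, and `a ↦ (b, c)`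
is injective where `b ≠ 0`. Two such exponentials with distinct `(b, c)` agree only where
`exp (γ * (c₁ - c₂))` takes a single value, a countable set because `exp` has countable fibres.
A finite union of countable sets is countable, and `ℂ` is not.
-/

open Complex Function

lemma countable_setOf_exp_mul_mem {d : ℂ} (hd : d ≠ 0) {s : Set ℂ} (hs : s.Countable) :
    {γ : ℂ | exp (γ * d) ∈ s}.Countable :=
  hs.preimage_cexp.preimage (mul_left_injective₀ hd)

lemma countable_setOf_mul_exp_eq {b₁ b₂ c₁ c₂ : ℂ} (hb₂ : b₂ ≠ 0) (h : (b₁, c₁) ≠ (b₂, c₂)) :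
    {γ : ℂ | b₁ * exp (γ * c₁) = b₂ * exp (γ * c₂)}.Countable := by
  by_cases hc : c₁ = c₂
  · subst hc
    convert Set.countable_empty
    refine Set.eq_empty_of_forall_notMem fun γ hγ => h ?_
    rw [Set.mem_ofPred_eq, mul_left_inj' (exp_ne_zero _)] at hγ
    rw [hγ]
  · refine (countable_setOf_exp_mul_mem (sub_ne_zero.2 hc)
      (Set.countable_singleton (b₂ / b₁))).mono fun γ hγ => ?_
    have hb₁ : b₁ ≠ 0 := by
      rintro rfl
      exact hb₂ (by simpa using hγ.symm)
    rw [Set.mem_ofPred_eq, Set.mem_singleton_iff, eq_div_iff hb₁, mul_sub, exp_sub,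
      div_mul_eq_mul_div, div_eq_iff (exp_ne_zero _), mul_comm, hγ]

lemma countable_setOf_not_injective {α ι β : Type*} [Finite ι] (F : α → ι → β)
    (h : ∀ i j, i ≠ j → {x | F x i = F x j}.Countable) :
    {x | ¬ Injective (F x)}.Countable := by
  refine (Set.countable_iUnion fun i => Set.countable_iUnion fun j =>
    Set.countable_iUnion fun hij : i ≠ j => h i j hij).mono fun x hx => ?_
  simp only [Set.mem_ofPred_eq, Injective, not_forall] at hx
  obtain ⟨i, j, hF, hij⟩ := hx
  exact Set.mem_iUnion.2 ⟨i, Set.mem_iUnion.2 ⟨j, Set.mem_iUnion.2 ⟨hij, hF⟩⟩⟩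

/-- For finitely many pairwise distinct points of ℂ² with nonzero second coordinates,
the set of γ for which the twisted points `Φ_γ(aⱼ)` fail to have pairwise distinct
second coordinates is countable; in particular some γ works. -/
theorem stmt2 (k : ℕ) (a : Fin k → ℂ × ℂ) (ha : Function.Injective a)
    (h2 : ∀ j, (a j).2 ≠ 0) :
    Set.Countable {γ : ℂ | ¬ Function.Injective
        (fun j : Fin k => (a j).2 * Complex.exp (-(γ * (a j).1 * (a j).2)))} ∧
      ∃ γ : ℂ, Function.Injective
        (fun j : Fin k => (a j).2 * Complex.exp (-(γ * (a j).1 * (a j).2))) := by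
  have hpair (i j : Fin k) (hij : i ≠ j) : {γ : ℂ | (a i).2 * exp (-(γ * (a i).1 * (a i).2)) =
      (a j).2 * exp (-(γ * (a j).1 * (a j).2))}.Countable := by
    have hcoeff : ((a i).2, -((a i).1 * (a i).2)) ≠ ((a j).2, -((a j).1 * (a j).2)) := by
      intro h
      obtain ⟨hb, hc⟩ := Prod.mk.inj h
      rw [hb, neg_inj, mul_left_inj' (h2 j)] at hc
      exact hij (ha (Prod.ext hc hb))
    simpa only [mul_neg, mul_assoc] using countable_setOf_mul_exp_eq (h2 j) hcoeff
  have hcount := countable_setOf_not_injective _ hpair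
  obtain ⟨γ, hγ⟩ :=
    (Set.ne_univ_iff_exists_notMem _).1 fun h => not_countable_complex (h ▸ hcount)
  exact ⟨hcount, γ, not_not.1 hγ⟩
end

section
/- For any polynomials P, Q ∈ ℂ[X], the map φ : ℂ → ℂ² defined by φ(t) = (t + P(e^{Q(t)}), e^{Q(t)}) is proper: for every R > 0 there is a compact set C ⊆ ℂ such that for every t ∉ C, the norm of φ(t) exceeds R. Equivalently, the preimage under φ of every compact subset of ℂ² is compact. -/
/-!
On the set where `‖e^{Q(t)}‖ ≤ R`, the continuous function `P` is bounded by some `B`, so there the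
first coordinate has norm at least `‖t‖ - B`. Hence `‖φ t‖ > R` as soon as `‖t‖ > R + B`, i.e. `φ`
tends to infinity at infinity; being continuous, it is proper.
-/

open Filter Metric Bornology

theorem tendsto_cobounded_prodMk_add_comp {E F : Type*} [SeminormedAddCommGroup E]
    [SeminormedAddCommGroup F] [ProperSpace F] {g : F → E} (hg : Continuous g) (s : E → F) :
    Tendsto (fun t ↦ (t + g (s t), s t)) (cobounded E) (cobounded (E × F)) := by
  rw [← tendsto_norm_atTop_iff_cobounded, Filter.tendsto_atTop]
  intro R
  obtain ⟨B, hB⟩ := (isCompact_closedBall (0 : F) R).exists_bound_of_continuousOn hg.continuousOn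
  filter_upwards [eventually_cobounded_le_norm (R + B)] with t ht
  rw [Prod.norm_def]
  rcases le_or_gt ‖s t‖ R with hs | hs
  · have hgB : ‖g (s t)‖ ≤ B := hB _ (mem_closedBall_zero_iff.2 hs)
    have : ‖t‖ - ‖g (s t)‖ ≤ ‖t + g (s t)‖ := by
      simpa using norm_sub_norm_le t (-g (s t))
    exact le_max_of_le_left (by linarith)
  · exact le_max_of_le_right hs.le

/-- The map `φ(t) = (t + P(e^{Q(t)}), e^{Q(t)})` is proper: outside suitable compact sets
its sup norm exceeds any given bound, equivalently preimages of compacts are compact. -/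
theorem stmt5 (P Q : Polynomial ℂ) (φ : ℂ → ℂ × ℂ)
    (hφ : ∀ t, φ t = (t + P.eval (Complex.exp (Q.eval t)), Complex.exp (Q.eval t))) :
    (∀ R : ℝ, 0 < R → ∃ C : Set ℂ, IsCompact C ∧
        ∀ t ∉ C, R < max ‖(φ t).1‖ ‖(φ t).2‖) ∧
      ∀ K : Set (ℂ × ℂ), IsCompact K → IsCompact (φ ⁻¹' K) := by
  have hφ' : φ = fun t ↦ (t + P.eval (Complex.exp (Q.eval t)), Complex.exp (Q.eval t)) :=
    funext hφ
  have htend : Tendsto φ (cocompact ℂ) (cocompact (ℂ × ℂ)) := by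
    rw [hφ']
    simpa only [← cobounded_eq_cocompact] using
      tendsto_cobounded_prodMk_add_comp P.continuous fun t ↦ Complex.exp (Q.eval t)
  refine ⟨fun R _ ↦ ?_, fun K hK ↦ ?_⟩
  · obtain ⟨C, hC, hCφ⟩ :=
      mem_cocompact.1 (htend.eventually (tendsto_norm_cocompact_atTop.eventually_gt_atTop R))
    exact ⟨C, hC, fun t ht ↦ hCφ ht⟩
  · exact (isProperMap_iff_tendsto_cocompact.2 ⟨by rw [hφ']; fun_prop, htend⟩).isCompact_preimage hK
end

section
/- Let α₁, …, α_k be pairwise distinct complex numbers and a₁, …, a_k points in ℂ² \ {z₂ = 0} with pairwise distinct second coordinates. Then there exists a proper injective holomorphic immersion φ : ℂ → ℂ² such that φ(α_j) = a_j for 1 ≤ j ≤ k and φ(ℂ) ⊆ ℂ² \ {(z₁, z₂) : z₂ = 0}. -/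
/-!
Choose an entire function `w` without zeros with `w (αⱼ) = (aⱼ)₂` (the exponential of an
interpolating polynomial for `log (aⱼ)₂`) and a polynomial `Q` with `Q ((aⱼ)₂) = (aⱼ)₁ - αⱼ`
(possible since the `(aⱼ)₂` are distinct). Then `φ t = (t + Q (w t), w t)` does it: it has the
holomorphic left inverse `z ↦ z₁ - Q z₂`, which makes it injective, an immersion (by the chain
rule) and a closed embedding, hence proper.
-/

open Function Topology Polynomial

theorem deriv_ne_zero_of_leftInverse {𝕜 E : Type*} [NontriviallyNormedField 𝕜]
    [NormedAddCommGroup E] [NormedSpace 𝕜 E] {g : 𝕜 → E} {ψ : E → 𝕜} (h : LeftInverse ψ g)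
    {t : 𝕜} (hψ : DifferentiableAt 𝕜 ψ (g t)) (hg : DifferentiableAt 𝕜 g t) :
    deriv g t ≠ 0 := by
  have hcomp := hψ.hasFDerivAt.comp_hasDerivAt t hg.hasDerivAt
  rw [h.comp_eq_id] at hcomp
  intro h0
  rw [h0, map_zero] at hcomp
  exact zero_ne_one (hcomp.unique (hasDerivAt_id t))

section ShearedGraph

variable {G F : Type*}

def shearedGraph [Add G] (f : G → F) (q : F → G) (t : G) : G × F :=
  (t + q (f t), f t)

theorem leftInverse_shearedGraph [AddGroup G] (f : G → F) (q : F → G) :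
    LeftInverse (fun z : G × F => z.1 - q z.2) (shearedGraph f q) :=
  fun t => add_sub_cancel_right t (q (f t))

theorem isClosedEmbedding_shearedGraph [AddGroup G] [TopologicalSpace G]
    [IsTopologicalAddGroup G] [T2Space G] [TopologicalSpace F] [T2Space F] {f : G → F} {q : F → G}
    (hf : Continuous f) (hq : Continuous q) : IsClosedEmbedding (shearedGraph f q) :=
  (leftInverse_shearedGraph f q).isClosedEmbedding (by fun_prop)
    (continuous_id.add (hq.comp hf) |>.prodMk hf)

variable {𝕜 : Type*} [NontriviallyNormedField 𝕜] [NormedAddCommGroup F] [NormedSpace 𝕜 F]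
  {f : 𝕜 → F} {q : F → 𝕜}

theorem differentiable_shearedGraph (hf : Differentiable 𝕜 f) (hq : Differentiable 𝕜 q) :
    Differentiable 𝕜 (shearedGraph f q) :=
  (differentiable_id.add (hq.comp hf)).prodMk hf

theorem deriv_shearedGraph_ne_zero (hf : Differentiable 𝕜 f) (hq : Differentiable 𝕜 q)
    (t : 𝕜) : deriv (shearedGraph f q) t ≠ 0 :=
  deriv_ne_zero_of_leftInverse (leftInverse_shearedGraph f q)
    (differentiableAt_fst.sub (hq.comp differentiable_snd _))
    (differentiable_shearedGraph hf hq t)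

end ShearedGraph

theorem exists_polynomial_eval_eq {K ι : Type*} [Field K] [Fintype ι] [DecidableEq ι]
    {x : ι → K} (hx : Injective x) (y : ι → K) : ∃ P : K[X], ∀ j, P.eval (x j) = y j :=
  ⟨Lagrange.interpolate Finset.univ x y,
    fun j => Lagrange.eval_interpolate_at_node y hx.injOn (Finset.mem_univ j)⟩

theorem exists_differentiable_ne_zero_interpolating {ι : Type*} [Fintype ι] [DecidableEq ι]
    {x : ι → ℂ} (hx : Injective x) {y : ι → ℂ} (hy : ∀ j, y j ≠ 0) :
    ∃ w : ℂ → ℂ, Differentiable ℂ w ∧ (∀ t, w t ≠ 0) ∧ ∀ j, w (x j) = y j := by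
  obtain ⟨P, hP⟩ := exists_polynomial_eval_eq hx fun j => Complex.log (y j)
  exact ⟨fun t => Complex.exp (P.eval t), P.differentiable.cexp, fun t => Complex.exp_ne_zero _,
    fun j => by simp only [hP, Complex.exp_log (hy j)]⟩

/-- Given distinct α₁,…,α_k ∈ ℂ and points aⱼ ∈ ℂ² \ {z₂ = 0} with pairwise distinct second
coordinates, there is a proper injective holomorphic immersion φ : ℂ → ℂ² with φ(αⱼ) = aⱼ
and image avoiding {z₂ = 0}. -/
theorem stmt8 (k : ℕ) (α : Fin k → ℂ) (hα : Function.Injective α)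
    (a : Fin k → ℂ × ℂ) (h0 : ∀ j, (a j).2 ≠ 0)
    (h2 : Function.Injective fun j => (a j).2) :
    ∃ φ : ℂ → ℂ × ℂ, Differentiable ℂ φ ∧ Function.Injective φ ∧
      (∀ t, deriv φ t ≠ 0) ∧
      (∀ K : Set (ℂ × ℂ), IsCompact K → IsCompact (φ ⁻¹' K)) ∧
      (∀ j, φ (α j) = a j) ∧ (∀ t, (φ t).2 ≠ 0) := by
  obtain ⟨w, hw, hw0, hwα⟩ := exists_differentiable_ne_zero_interpolating hα h0
  obtain ⟨Q, hQ⟩ := exists_polynomial_eval_eq h2 fun j => (a j).1 - α j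
  refine ⟨shearedGraph w Q.eval, differentiable_shearedGraph hw Q.differentiable,
    (leftInverse_shearedGraph w Q.eval).injective,
    deriv_shearedGraph_ne_zero hw Q.differentiable,
    fun K hK => (isClosedEmbedding_shearedGraph hw.continuous Q.continuous).isCompact_preimage hK,
    fun j => ?_, hw0⟩
  simp only [shearedGraph, hwα, hQ, add_sub_cancel]
end

section
/- Let L ⊆ ℝ^m be a compact set, K ⊆ L a compact set with positive distance r₀ from the boundary ∂L, and suppose r ∈ (0, r₀) is such that every connected component of K contains a closed ball of radius r. Let ψ : ℝ^m → ℝ^m be a homeomorphism with |ψ(z) − z| ≤ r for all z ∈ L. If K has finitely many connected components, then K ⊆ ψ(L). -/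
/-!
Fix a component `C` of `K` and a ball `closedBall c r ⊆ C`. Since `ψ` moves `c` by at most `r`,
`ψ c ∈ C`, so `C` meets `ψ '' L`. A point `y = ψ z` of `C ∩ ψ '' L` lies within `r < r₀` of `z`,
so `z` cannot be on `∂L`: thus `C ∩ ψ '' L ⊆ ψ '' interior L`. The latter set is open and the
former closed, so the connected set `C` lies in `ψ '' L`.
-/

open Metric

theorem IsPreconnected.subset_of_inter_subset_of_isOpen {X : Type*} [TopologicalSpace X]
    {s U F : Set X} (hs : IsPreconnected s) (hU : IsOpen U) (hF : IsClosed F) (hUF : U ⊆ F)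
    (hsF : s ∩ F ⊆ U) (hmeet : (s ∩ F).Nonempty) : s ⊆ F := by
  have hsU : s ⊆ U := by
    refine hs.subset_of_closure_inter_subset hU ?_ ?_
    · obtain ⟨y, hy⟩ := hmeet
      exact ⟨y, hy.1, hsF hy⟩
    · intro y ⟨hyU, hys⟩
      exact hsF ⟨hys, hF.closure_subset_iff.2 hUF hyU⟩
  exact hsU.trans hUF

theorem mem_image_interior_of_dist_le {X : Type*} [MetricSpace X] {L : Set X} {ψ : X → X}
    {r r₀ : ℝ} (hψ : ∀ z ∈ L, dist (ψ z) z ≤ r) (hr : r < r₀) {y : X}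
    (hy : ∀ w ∈ frontier L, r₀ ≤ dist y w) (hyL : y ∈ ψ '' L) : y ∈ ψ '' interior L := by
  obtain ⟨z, hzL, rfl⟩ := hyL
  refine ⟨z, ?_, rfl⟩
  by_contra hz
  linarith [hy z ⟨subset_closure hzL, hz⟩, hψ z hzL]

theorem IsPreconnected.subset_image_of_dist_le {X : Type*} [MetricSpace X] {L s : Set X}
    {ψ : X ≃ₜ X} {r r₀ : ℝ} (hL : IsCompact L) (hs : IsPreconnected s)
    (hψ : ∀ z ∈ L, dist (ψ z) z ≤ r) (hr : r < r₀)
    (hdist : ∀ y ∈ s, ∀ w ∈ frontier L, r₀ ≤ dist y w) (hmeet : (s ∩ ψ '' L).Nonempty) :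
    s ⊆ ψ '' L :=
  hs.subset_of_inter_subset_of_isOpen (ψ.isOpenMap _ isOpen_interior)
    (hL.image ψ.continuous).isClosed (Set.image_mono interior_subset)
    (fun _ hy ↦ mem_image_interior_of_dist_le hψ hr (hdist _ hy.1) hy.2) hmeet

theorem stmt11_general (m : ℕ) (L K : Set (EuclideanSpace ℝ (Fin m)))
    (hL : IsCompact L) (hKL : K ⊆ L)
    (r₀ r : ℝ)
    (hdist : ∀ x ∈ K, ∀ y ∈ frontier L, r₀ ≤ dist x y)
    (hr : r ∈ Set.Ioo 0 r₀)
    (hball : ∀ x ∈ K, ∃ c, Metric.closedBall c r ⊆ connectedComponentIn K x)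
    (ψ : EuclideanSpace ℝ (Fin m) ≃ₜ EuclideanSpace ℝ (Fin m))
    (hψ : ∀ z ∈ L, ‖ψ z - z‖ ≤ r) :
    K ⊆ ψ '' L := by
  intro x hx
  have hψ' : ∀ z ∈ L, dist (ψ z) z ≤ r := fun z hz ↦ (dist_eq_norm _ _).trans_le (hψ z hz)
  obtain ⟨c, hc⟩ := hball x hx
  have hCK : connectedComponentIn K x ⊆ K := connectedComponentIn_subset K x
  have hcL : c ∈ L := hKL (hCK (hc (mem_closedBall_self hr.1.le)))
  have hψc : ψ c ∈ connectedComponentIn K x := hc (mem_closedBall.2 (hψ' c hcL))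
  exact isPreconnected_connectedComponentIn.subset_image_of_dist_le hL hψ' hr.2
    (fun y hy ↦ hdist y (hCK hy)) ⟨ψ c, hψc, c, hcL, rfl⟩ (mem_connectedComponentIn hx)

/-- If K ⊆ L are compact in ℝ^m, K is at distance at least r₀ > r > 0 from ∂L, K has finitely
many connected components each containing a closed ball of radius r, and ψ is a homeomorphism
moving points of L by at most r, then K ⊆ ψ(L). -/
theorem stmt11 (m : ℕ) (L K : Set (EuclideanSpace ℝ (Fin m)))
    (hL : IsCompact L) (hK : IsCompact K) (hKL : K ⊆ L)
    (r₀ r : ℝ) (hr₀ : 0 < r₀)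
    (hdist : ∀ x ∈ K, ∀ y ∈ frontier L, r₀ ≤ dist x y)
    (hr : r ∈ Set.Ioo 0 r₀)
    (hball : ∀ x ∈ K, ∃ c, Metric.closedBall c r ⊆ connectedComponentIn K x)
    (ψ : EuclideanSpace ℝ (Fin m) ≃ₜ EuclideanSpace ℝ (Fin m))
    (hψ : ∀ z ∈ L, ‖ψ z - z‖ ≤ r)
    (hfin : Set.Finite {S : Set (EuclideanSpace ℝ (Fin m)) |
        ∃ x ∈ K, S = connectedComponentIn K x}) :
    K ⊆ ψ '' L :=
  stmt11_general m L K hL hKL r₀ r hdist hr hball ψ hψ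
end

section
/- Let f = (f₁, f₂) : ℂ → ℂ² be a proper holomorphic map such that for every z ∈ ℂ, min(|f₁(z)|, |f₂(z)|) < 1. Then one of the functions f₁, f₂ is a constant of modulus less than 1 (and the other is a nonconstant polynomial). -/
/-!
Outside a large disc `max ‖f₁‖ ‖f₂‖ ≥ 1`, so exactly one of `‖f₁‖ < 1`, `‖f₂‖ < 1` holds there;
the exterior of a disc is connected, so the same one, say `‖f₁‖ < 1`, holds on all of it. Then
`f₁` is bounded, hence a constant by Liouville, and `f₂` is a proper entire function, hence a
polynomial: `w ↦ 1 / f₂ (1 / w)` has a removable zero of some order `n` at `0`, so `f₂ = O(zⁿ)`,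
and Cauchy's estimates kill the Taylor coefficients of `f₂` beyond `n`.
-/

open Filter Metric Topology Asymptotics
open scoped Nat

namespace Differentiable

variable {f : ℂ → ℂ}

theorem iteratedDeriv_eq_zero_of_isBigO_pow (hf : Differentiable ℂ f) {n k : ℕ}
    (hO : f =O[cocompact ℂ] (· ^ n)) (hk : n < k) : iteratedDeriv k f 0 = 0 := by
  obtain ⟨m, rfl⟩ := Nat.exists_eq_add_of_lt hk
  obtain ⟨C, hC⟩ := hO.bound
  rw [← cobounded_eq_cocompact, ← comap_norm_atTop, eventually_comap] at hC
  have hcauchy : ∀ᶠ R in atTop,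
      ‖iteratedDeriv (n + m + 1) f 0‖ ≤ (n + m + 1)! * C / R ^ (m + 1) := by
    filter_upwards [hC, eventually_gt_atTop 0] with R hR hR0
    calc ‖iteratedDeriv (n + m + 1) f 0‖ ≤ (n + m + 1)! * (C * R ^ n) / R ^ (n + m + 1) :=
          Complex.norm_iteratedDeriv_le_of_forall_mem_sphere_norm_le _ hR0 hf.diffContOnCl
            fun z hz => by
              have hz := mem_sphere_zero_iff_norm.mp hz
              simpa [hz] using hR z hz
      _ = (n + m + 1)! * C / R ^ (m + 1) := by
          rw [add_assoc, pow_add]; field_simp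
  have hlim : Tendsto (fun R : ℝ => (n + m + 1)! * C / R ^ (m + 1)) atTop (𝓝 0) :=
    tendsto_const_nhds.div_atTop (tendsto_pow_atTop m.succ_ne_zero)
  exact norm_le_zero_iff.mp (ge_of_tendsto hlim hcauchy)

theorem exists_polynomial_of_isBigO_pow (hf : Differentiable ℂ f) {n : ℕ}
    (hO : f =O[cocompact ℂ] (· ^ n)) : ∃ p : Polynomial ℂ, ∀ z, f z = p.eval z := by
  refine ⟨∑ k ∈ Finset.range (n + 1), Polynomial.monomial k ((k ! : ℂ)⁻¹ * iteratedDeriv k f 0),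
    fun z => ?_⟩
  have htaylor := Complex.hasSum_taylorSeries_of_entire hf 0 z
  rw [htaylor.unique (hasSum_sum_of_ne_finset_zero (s := Finset.range (n + 1)) fun k hk => ?_)]
  · simp [Polynomial.eval_finsetSum, mul_comm, mul_left_comm]
  · simp [hf.iteratedDeriv_eq_zero_of_isBigO_pow hO (by simpa using hk)]

theorem analyticAt_update_inv_comp_inv (hf : Differentiable ℂ f)
    (hp : Tendsto (‖f ·‖) (cocompact ℂ) atTop) :
    AnalyticAt ℂ (Function.update (fun w => (f w⁻¹)⁻¹) 0 0) 0 := by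
  have hinv : Tendsto (·⁻¹) (𝓝[≠] (0 : ℂ)) (cocompact ℂ) :=
    cobounded_eq_cocompact (α := ℂ) ▸ tendsto_inv₀_nhdsNE_zero
  have hne : ∀ᶠ w in 𝓝[≠] (0 : ℂ), f w⁻¹ ≠ 0 :=
    hinv.eventually ((hp.eventually_gt_atTop 0).mono fun _ => norm_pos_iff.mp)
  refine Complex.analyticAt_of_differentiable_on_punctured_nhds_of_continuousAt ?_
    (continuousAt_update_same.mpr ?_)
  · filter_upwards [hne, self_mem_nhdsWithin] with w hfw hw
    refine (((hf _).comp w (differentiableAt_inv hw)).inv hfw).congr_of_eventuallyEq ?_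
    filter_upwards [isOpen_ne.mem_nhds hw] with u hu
    exact Function.update_of_ne hu _ _
  · exact tendsto_inv₀_cobounded.comp (tendsto_norm_atTop_iff_cobounded.mp (hp.comp hinv))

theorem exists_isBigO_pow_of_tendsto_norm_cocompact (hf : Differentiable ℂ f)
    (hp : Tendsto (‖f ·‖) (cocompact ℂ) atTop) : ∃ n : ℕ, f =O[cocompact ℂ] (· ^ n) := by
  set g := Function.update (fun w => (f w⁻¹)⁻¹) 0 0
  have hinv : Tendsto (·⁻¹) (cocompact ℂ) (𝓝[≠] 0) :=
    cobounded_eq_cocompact (α := ℂ) ▸ tendsto_inv₀_cobounded'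
  have hg_inv : ∀ᶠ z in cocompact ℂ, g z⁻¹ = (f z)⁻¹ := by
    filter_upwards [hinv.eventually self_mem_nhdsWithin] with z hz
    simp [g, Function.update_of_ne hz]
  have hg_ne : ¬∀ᶠ w in 𝓝 0, g w = 0 := fun h => by
    obtain ⟨z, hgz, hfz, hz⟩ := ((hinv.mono_right nhdsWithin_le_nhds).eventually h |>.and
      (hg_inv.and (hp.eventually_gt_atTop 0))).exists
    simp_all
  obtain ⟨n, h, hh, hh0, hgh⟩ :=
    (hf.analyticAt_update_inv_comp_inv hp).exists_eventuallyEq_pow_smul_nonzero_iff.mpr hg_ne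
  have hfeq : (fun z => z ^ n * (h z⁻¹)⁻¹) =ᶠ[cocompact ℂ] f := by
    filter_upwards [(hinv.mono_right nhdsWithin_le_nhds).eventually hgh, hg_inv] with z hz hgz
    change g z⁻¹ = _ at hz
    rw [hgz, sub_zero, smul_eq_mul, inv_pow] at hz
    rw [← inv_inv (f z), hz, mul_inv, inv_inv]
  have hbdd : (fun z => (h z⁻¹)⁻¹) =O[cocompact ℂ] (fun _ => (1 : ℂ)) :=
    ((hh.continuousAt.tendsto.comp (hinv.mono_right nhdsWithin_le_nhds)).inv₀ hh0).isBigO_one ℂ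
  exact ⟨n, ((isBigO_refl (· ^ n) _).mul hbdd).congr' hfeq (by simp)⟩

theorem exists_polynomial_of_tendsto_norm_cocompact (hf : Differentiable ℂ f)
    (hp : Tendsto (‖f ·‖) (cocompact ℂ) atTop) :
    ∃ p : Polynomial ℂ, 0 < p.degree ∧ ∀ z, f z = p.eval z := by
  obtain ⟨n, hO⟩ := hf.exists_isBigO_pow_of_tendsto_norm_cocompact hp
  obtain ⟨p, hfp⟩ := hf.exists_polynomial_of_isBigO_pow hO
  refine ⟨p, lt_of_not_ge fun hdeg => ?_, hfp⟩
  rw [Polynomial.eq_C_of_degree_le_zero hdeg] at hfp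
  exact not_tendsto_const_atTop ‖p.coeff 0‖ _ (hp.congr fun z => by simp [hfp z])

theorem exists_const_of_norm_lt_outside_closedBall (hf : Differentiable ℂ f) {R r : ℝ}
    (hsub : ∀ z, R < ‖z‖ → ‖f z‖ < r) : ∃ c, ‖c‖ < r ∧ ∀ z, f z = c := by
  obtain ⟨M, hM⟩ := (isCompact_closedBall (0 : ℂ) R).exists_bound_of_continuousOn
    hf.continuous.continuousOn
  have hbdd : ∀ z, ‖f z‖ ≤ max M r := fun z => by
    rcases le_or_gt ‖z‖ R with hz | hz
    · exact (hM z (mem_closedBall_zero_iff.mpr hz)).trans (le_max_left _ _)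
    · exact (hsub z hz).le.trans (le_max_right _ _)
  obtain ⟨c, hc⟩ := hf.exists_const_forall_eq_of_bounded
    (isBounded_iff_forall_norm_le.mpr ⟨_, Set.forall_mem_range.mpr hbdd⟩)
  obtain ⟨z, hz⟩ := NormedField.exists_lt_norm ℂ R
  exact ⟨c, hc z ▸ hsub z hz, hc⟩

end Differentiable

theorem isPreconnected_setOf_lt_norm {E : Type*} [NormedAddCommGroup E] [NormedSpace ℝ E]
    (hE : 1 < Module.rank ℝ E) {R : ℝ} (hR : 0 ≤ R) : IsPreconnected {z : E | R < ‖z‖} := by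
  have hset : (fun p : ℝ × E => p.1 • p.2) '' (Set.Ioi R ×ˢ sphere 0 1) = {z : E | R < ‖z‖} := by
    ext z
    simp only [Set.mem_image, Set.mem_prod, Set.mem_Ioi, mem_sphere_zero_iff_norm, Prod.exists,
      Set.mem_ofPred_eq]
    constructor
    · rintro ⟨r, u, ⟨hr, hu⟩, rfl⟩
      rwa [norm_smul, hu, mul_one, Real.norm_of_nonneg (hR.trans hr.le)]
    · intro hz
      have hz0 : ‖z‖ ≠ 0 := (hR.trans_lt hz).ne'
      refine ⟨‖z‖, ‖z‖⁻¹ • z, ⟨hz, ?_⟩, ?_⟩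
      · rw [norm_smul, norm_inv, norm_norm, inv_mul_cancel₀ hz0]
      · rw [smul_smul, mul_inv_cancel₀ hz0, one_smul]
  rw [← hset]
  exact (isPreconnected_Ioi.prod (isPreconnected_sphere hE 0 1)).image _
    (continuous_fst.smul continuous_snd).continuousOn

theorem exists_const_and_polynomial_of_norm_lt_one_outside_closedBall {f₁ f₂ : ℂ → ℂ}
    (h₁ : Differentiable ℂ f₁) (h₂ : Differentiable ℂ f₂)
    (hproper : Tendsto (fun z => max ‖f₁ z‖ ‖f₂ z‖) (cocompact ℂ) atTop) {R : ℝ}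
    (hsub : ∀ z, R < ‖z‖ → ‖f₁ z‖ < 1) :
    ∃ c : ℂ, ‖c‖ < 1 ∧ (∀ z, f₁ z = c) ∧
      ∃ p : Polynomial ℂ, 0 < p.degree ∧ ∀ z, f₂ z = p.eval z := by
  obtain ⟨c, hc1, hc⟩ := h₁.exists_const_of_norm_lt_outside_closedBall hsub
  have hproper₂ : Tendsto (‖f₂ ·‖) (cocompact ℂ) atTop := by
    refine tendsto_atTop_mono (fun z => ?_) (tendsto_atTop_add_const_right _ (-1) hproper)
    have : max ‖c‖ ‖f₂ z‖ ≤ ‖f₂ z‖ + 1 :=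
      max_le (by linarith [norm_nonneg (f₂ z)]) (by linarith)
    rw [hc z]
    linarith
  exact ⟨c, hc1, hc, h₂.exists_polynomial_of_tendsto_norm_cocompact hproper₂⟩

/-- If f = (f₁,f₂) : ℂ → ℂ² is a proper holomorphic map with `min(|f₁(z)|,|f₂(z)|) < 1` for
all z, then one of f₁, f₂ is a constant of modulus less than 1 and the other is a nonconstant
polynomial. -/
theorem stmt14 (f₁ f₂ : ℂ → ℂ) (h₁ : Differentiable ℂ f₁) (h₂ : Differentiable ℂ f₂)
    (hproper : Filter.Tendsto (fun z => ‖((f₁ z, f₂ z) : ℂ × ℂ)‖)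
      (Filter.cocompact ℂ) Filter.atTop)
    (hmin : ∀ z, min (‖f₁ z‖) (‖f₂ z‖) < 1) :
    (∃ c : ℂ, ‖c‖ < 1 ∧ (∀ z, f₁ z = c) ∧
        ∃ p : Polynomial ℂ, 0 < p.degree ∧ ∀ z, f₂ z = p.eval z) ∨
      (∃ c : ℂ, ‖c‖ < 1 ∧ (∀ z, f₂ z = c) ∧
        ∃ p : Polynomial ℂ, 0 < p.degree ∧ ∀ z, f₁ z = p.eval z) := by
  have hmax : Tendsto (fun z => max ‖f₁ z‖ ‖f₂ z‖) (cocompact ℂ) atTop := hproper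
  obtain ⟨R, -, hR⟩ := hasBasis_cobounded_norm.eventually_iff.mp
    (cobounded_eq_cocompact (α := ℂ) ▸ hmax.eventually_ge_atTop 1)
  have hS : IsPreconnected {z : ℂ | max R 0 < ‖z‖} :=
    isPreconnected_setOf_lt_norm (by rw [Complex.rank_real_complex]; norm_num) (le_max_right R 0)
  obtain hsub | hsub := isPreconnected_iff_subset_of_disjoint.mp hS _ _
    (isOpen_lt h₁.continuous.norm continuous_const) (isOpen_lt h₂.continuous.norm continuous_const)
    (fun z _ => min_lt_iff.mp (hmin z)) (Set.eq_empty_of_forall_notMem fun z ⟨hz, hz₁, hz₂⟩ =>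
      (hR ((le_max_left R 0).trans hz.le)).not_gt (max_lt hz₁ hz₂))
  · exact .inl (exists_const_and_polynomial_of_norm_lt_one_outside_closedBall h₁ h₂ hmax
      fun _ hz => hsub hz)
  · exact .inr (exists_const_and_polynomial_of_norm_lt_one_outside_closedBall h₂ h₁
      (by simpa only [max_comm] using hmax) fun _ hz => hsub hz)
end

section
/- Let b₁, …, b_m ∈ ℂⁿ (n ≥ 2) be finitely many points all of whose coordinates are nonzero. Then for all sufficiently small ε > 0, the overshear Φ_ε(z) = (z₁ · exp(z₂⋯zₙ(ε + Σ_{j=2}^n ε^j z_j)), z₂, …, zₙ) maps these points to points whose products of the first n−1 coordinates are pairwise distinct, provided the original points are pairwise distinct. -/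
open Polynomial Filter Set

noncomputable def pW (m : ℕ) (w : Fin (m+1) → ℂ) : Polynomial ℂ :=
  Polynomial.C (∏ j', Fin.tail w j') *
    (Polynomial.X + ∑ j' : Fin m, Polynomial.X ^ ((j' : ℕ) + 2) * Polynomial.C (Fin.tail w j'))

lemma pW_eval (m : ℕ) (w : Fin (m+1) → ℂ) (z : ℂ) :
    (pW m w).eval z
      = (∏ j', Fin.tail w j') * (z + ∑ j' : Fin m, z ^ ((j' : ℕ) + 2) * Fin.tail w j') := by
  simp only [pW, eval_mul, eval_add, eval_X, eval_pow, eval_C, eval_finset_sum]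

lemma pW_eval_zero (m : ℕ) (w : Fin (m+1) → ℂ) : (pW m w).eval 0 = 0 := by
  rw [pW_eval]; simp

lemma pW_coeff_one (m : ℕ) (w : Fin (m+1) → ℂ) :
    (pW m w).coeff 1 = ∏ j', Fin.tail w j' := by
  simp only [pW, coeff_C_mul, coeff_add, coeff_X_one, finset_sum_coeff, coeff_mul_C,
    coeff_X_pow]
  simp

lemma pW_coeff (m : ℕ) (w : Fin (m+1) → ℂ) (k : Fin m) :
    (pW m w).coeff ((k : ℕ) + 2) = (∏ j', Fin.tail w j') * Fin.tail w k := by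
  simp only [pW, coeff_C_mul, coeff_add, coeff_X, finset_sum_coeff, coeff_mul_C,
    coeff_X_pow]
  rw [Finset.sum_eq_single k]
  · simp
  · intro j _ hj
    simp [Fin.val_eq_val, Ne.symm hj]
  · simp

lemma prod_cons (m' : ℕ) (x : ℂ) (t : Fin (m'+1) → ℂ) :
    ∏ j : Fin (m'+1), (Fin.cons x t : Fin (m'+2) → ℂ) j.castSucc
      = x * ∏ j : Fin m', t j.castSucc := by
  rw [Fin.prod_univ_succ]
  simp only [Fin.castSucc_zero, Fin.cons_zero]
  refine congrArg (x * ·) (Finset.prod_congr rfl fun j _ => ?_)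
  rw [← Fin.succ_castSucc, Fin.cons_succ]

lemma key (m' : ℕ) (u v : Fin (m'+2) → ℂ) (hu : ∀ j, u j ≠ 0) (hv : ∀ j, v j ≠ 0)
    (huv : u ≠ v) :
    ∀ᶠ z in nhdsWithin (0:ℂ) {(0:ℂ)}ᶜ,
      (∏ j : Fin (m'+1), u j.castSucc) * Complex.exp ((pW (m'+1) u).eval z)
        ≠ (∏ j : Fin (m'+1), v j.castSucc) * Complex.exp ((pW (m'+1) v).eval z) := by
  set A := ∏ j : Fin (m'+1), u j.castSucc with hA
  set B := ∏ j : Fin (m'+1), v j.castSucc with hB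
  have hAne : A ≠ 0 := Finset.prod_ne_zero_iff.2 fun j _ => hu _
  have hBne : B ≠ 0 := Finset.prod_ne_zero_iff.2 fun j _ => hv _
  set f : ℂ → ℂ := fun z =>
    A * Complex.exp ((pW (m'+1) u).eval z) - B * Complex.exp ((pW (m'+1) v).eval z) with hf
  have hd : Differentiable ℂ f :=
    (((pW (m'+1) u).differentiable.cexp).const_mul A).sub
      (((pW (m'+1) v).differentiable.cexp).const_mul B)
  rcases (hd.analyticAt 0).eventually_eq_zero_or_eventually_ne_zero with h | h
  · exfalso
    have hall : ∀ z, f z = 0 := fun z =>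
      (Complex.analyticOnNhd_univ_iff_differentiable.2 hd).eqOn_zero_of_preconnected_of_eventuallyEq_zero
        isPreconnected_univ (Set.mem_univ 0) h (Set.mem_univ z)
    have hAB : A = B := by
      have := hall 0
      rw [hf] at this
      simp only [pW_eval_zero, Complex.exp_zero, mul_one, sub_eq_zero] at this
      exact this
    have hexp : ∀ z, Complex.exp ((pW (m'+1) u).eval z) = Complex.exp ((pW (m'+1) v).eval z) := by
      intro z
      have := hall z
      rw [hf, hAB, sub_eq_zero] at this
      exact mul_left_cancel₀ (hAB ▸ hAne) this
    set q : Polynomial ℂ := pW (m'+1) u - pW (m'+1) v with hqdef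
    have hq1 : ∀ z, Complex.exp (q.eval z) = 1 := by
      intro z
      rw [hqdef, eval_sub, Complex.exp_sub, hexp z, div_self (Complex.exp_ne_zero _)]
    have hderiv : ∀ z : ℂ, (derivative q).eval z = 0 := by
      intro z
      have h1 : HasDerivAt (fun z => Complex.exp (q.eval z))
          (Complex.exp (q.eval z) * (derivative q).eval z) z := (q.hasDerivAt z).cexp
      have h2 : HasDerivAt (fun z => Complex.exp (q.eval z)) 0 z := by
        have he : (fun z => Complex.exp (q.eval z)) = fun _ => (1:ℂ) := funext hq1
        rw [he]; exact hasDerivAt_const z 1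
      have := h1.unique h2
      rcases mul_eq_zero.1 this with h' | h'
      · exact absurd h' (Complex.exp_ne_zero _)
      · exact h'
    have hq' : derivative q = 0 := Polynomial.funext fun r => by simp [hderiv r]
    have hq0 : q = 0 := by
      have hdeg := Polynomial.natDegree_eq_zero_of_derivative_eq_zero hq'
      have hc := Polynomial.eq_C_of_natDegree_eq_zero hdeg
      have he0 : q.eval 0 = 0 := by
        rw [hqdef, eval_sub, pW_eval_zero, pW_eval_zero, sub_zero]
      rw [hc] at he0 ⊢
      simp only [eval_C] at he0
      rw [he0, map_zero]
    have hT : (∏ j', Fin.tail u j') = ∏ j', Fin.tail v j' := by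
      have : q.coeff 1 = 0 := by rw [hq0]; simp
      rw [hqdef, Polynomial.coeff_sub, pW_coeff_one, pW_coeff_one, sub_eq_zero] at this
      exact this
    have hTne : (∏ j', Fin.tail u j') ≠ 0 :=
      Finset.prod_ne_zero_iff.2 fun j _ => hu _
    have htail : Fin.tail u = Fin.tail v := by
      funext k
      have : q.coeff ((k : ℕ) + 2) = 0 := by rw [hq0]; simp
      rw [hqdef, Polynomial.coeff_sub, pW_coeff, pW_coeff, sub_eq_zero, ← hT] at this
      exact mul_left_cancel₀ hTne this
    have hu0 : u 0 = v 0 := by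
      have hA' : A = u 0 * ∏ j : Fin m', Fin.tail u j.castSucc := by
        rw [hA, ← prod_cons m' (u 0) (Fin.tail u), Fin.cons_self_tail]
      have hB' : B = v 0 * ∏ j : Fin m', Fin.tail v j.castSucc := by
        rw [hB, ← prod_cons m' (v 0) (Fin.tail v), Fin.cons_self_tail]
      have hRne : (∏ j : Fin m', Fin.tail u j.castSucc) ≠ 0 :=
        Finset.prod_ne_zero_iff.2 fun j _ => hu _
      rw [hA', hB', ← htail] at hAB
      exact mul_right_cancel₀ hRne hAB
    apply huv
    rw [← Fin.cons_self_tail u, ← Fin.cons_self_tail v, hu0, htail]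
  · exact h.mono fun z hz he => hz (sub_eq_zero.2 he)

/-- For pairwise distinct points b₁,…,b_N of ℂⁿ (n = m+1 ≥ 2) with all coordinates nonzero,
for all sufficiently small ε > 0 the overshear
`Φ_ε(z) = (z₁·exp(z₂⋯zₙ(ε + Σⱼ εʲ zⱼ)), z₂, …, zₙ)` maps them to points whose products of
the first n-1 coordinates are pairwise distinct. -/
theorem stmt16 (m N : ℕ) (hm : 1 ≤ m) (b : Fin N → Fin (m + 1) → ℂ)
    (hb0 : ∀ i j, b i j ≠ 0) (hb : Function.Injective b) :
    ∃ ε₀ > (0 : ℝ), ∀ ε : ℝ, 0 < ε → ε < ε₀ →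
      Function.Injective (fun i : Fin N =>
        ∏ j : Fin m,
          (Fin.cons
            (b i 0 * Complex.exp ((∏ j' , Fin.tail (b i) j') *
              ((ε : ℂ) + ∑ j' : Fin m, (ε : ℂ) ^ ((j' : ℕ) + 2) * Fin.tail (b i) j')))
            (Fin.tail (b i)) : Fin (m + 1) → ℂ) j.castSucc) := by
  obtain ⟨m', rfl⟩ : ∃ m'', m = m'' + 1 := ⟨m - 1, (Nat.succ_pred_eq_of_pos hm).symm⟩
  set V : Fin N → ℝ → ℂ := fun i ε =>
    ∏ j : Fin (m'+1),
      (Fin.cons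
        (b i 0 * Complex.exp ((∏ j', Fin.tail (b i) j') *
          ((ε : ℂ) + ∑ j' : Fin (m'+1), (ε : ℂ) ^ ((j' : ℕ) + 2) * Fin.tail (b i) j')))
        (Fin.tail (b i)) : Fin (m' + 2) → ℂ) j.castSucc with hV
  have hVeq : ∀ i ε, V i ε =
      (∏ j : Fin (m'+1), b i j.castSucc) * Complex.exp ((pW (m'+1) (b i)).eval (ε : ℂ)) := by
    intro i ε
    rw [hV]
    dsimp only
    rw [prod_cons, pW_eval]
    have : ∏ j : Fin (m'+1), b i j.castSucc
        = b i 0 * ∏ j : Fin m', Fin.tail (b i) j.castSucc := by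
      rw [← prod_cons m' (b i 0) (Fin.tail (b i)), Fin.cons_self_tail]
    rw [this]; ring
  have htend : Filter.Tendsto (fun ε : ℝ => (ε : ℂ)) (nhdsWithin 0 (Set.Ioi 0))
      (nhdsWithin (0:ℂ) {(0:ℂ)}ᶜ) := by
    rw [tendsto_nhdsWithin_iff]
    constructor
    · exact (Complex.continuous_ofReal.tendsto 0).mono_left nhdsWithin_le_nhds
    · exact eventually_mem_nhdsWithin.mono fun ε hε =>
        Complex.ofReal_ne_zero.2 (ne_of_gt hε)
  have hpair : ∀ i k : Fin N, ∀ᶠ ε in nhdsWithin (0:ℝ) (Set.Ioi 0),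
      V i ε = V k ε → i = k := by
    intro i k
    by_cases hik : i = k
    · exact Filter.Eventually.of_forall fun _ _ => hik
    · have hbne : b i ≠ b k := fun h => hik (hb h)
      have := htend.eventually (key m' (b i) (b k) (hb0 i) (hb0 k) hbne)
      exact this.mono fun ε hε hVik => absurd (by rw [← hVeq, ← hVeq, hVik]) hε
  have hall : ∀ᶠ ε in nhdsWithin (0:ℝ) (Set.Ioi 0),
      ∀ i k : Fin N, V i ε = V k ε → i = k :=
    Filter.eventually_all.2 fun i => Filter.eventually_all.2 (hpair i)
  rw [Filter.eventually_iff, mem_nhdsGT_iff_exists_Ioo_subset] at hall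
  obtain ⟨ε₀, hε₀, hsub⟩ := hall
  refine ⟨ε₀, hε₀, fun ε h1 h2 => ?_⟩
  intro i k hik
  exact hsub ⟨h1, h2⟩ i k hik
end
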